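/- Let Γ ≅ (ℤ/2)³ act linearly on Λ^m(ℝ⁷)* through the sign actions induced by α, β, γ (where α negates coordinates x₄,…,x₇, β negates x₂,x₃,x₆,x₇, and γ negates x₁,x₃,x₅,x₇). Then the subspace of Γ-invariant 2-forms is zero, and the subspace of Γ-invariant 3-forms has dimension 7. -/

import Mathlib

/-- The linear involution of `ℝ⁷` negating the coordinates in `S`. -/
def sgnMap (S : Finset (Fin 7)) : (Fin 7 → ℝ) →ₗ[ℝ] (Fin 7 → ℝ) where
  toFun x := fun i => if i ∈ S then -x i else x i
  map_add' x y := by funext i; by_cases h : i ∈ S <;> simp [h] <;> ring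
  map_smul' c x := by funext i; by_cases h : i ∈ S <;> simp [h]

/-- The submodule of constant-coefficient `m`-forms on `ℝ⁷` invariant under the
`Γ ≅ (ℤ/2)³` action generated by the linear parts of `α` (negating `x₄,…,x₇`,
0-indexed `3,4,5,6`), `β` (negating `x₂,x₃,x₆,x₇`, 0-indexed `1,2,5,6`) and `γ`
(negating `x₁,x₃,x₅,x₇`, 0-indexed `0,2,4,6`). -/
noncomputable def invariantForms (m : ℕ) : Submodule ℝ ((Fin 7 → ℝ) [⋀^Fin m]→ₗ[ℝ] ℝ) where
  carrier := {w | w.compLinearMap (sgnMap {3, 4, 5, 6}) = w ∧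
      w.compLinearMap (sgnMap {1, 2, 5, 6}) = w ∧
      w.compLinearMap (sgnMap {0, 2, 4, 6}) = w}
  add_mem' := by
    intro a b ha hb
    obtain ⟨ha1, ha2, ha3⟩ := ha
    obtain ⟨hb1, hb2, hb3⟩ := hb
    refine ⟨?_, ?_, ?_⟩ <;>
      simp [AlternatingMap.add_compLinearMap, ha1, ha2, ha3, hb1, hb2, hb3]
  zero_mem' := by
    refine ⟨?_, ?_, ?_⟩ <;> exact AlternatingMap.zero_compLinearMap _
  smul_mem' := by
    intro c a ha
    obtain ⟨ha1, ha2, ha3⟩ := ha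
    have key : ∀ L : (Fin 7 → ℝ) →ₗ[ℝ] (Fin 7 → ℝ),
        (c • a).compLinearMap L = c • a.compLinearMap L := by
      intro L
      ext v
      simp [AlternatingMap.compLinearMap_apply]
    refine ⟨?_, ?_, ?_⟩ <;> simp [key, ha1, ha2, ha3]


/-!
The generators of `Γ` are diagonal in the standard basis: the one negating the coordinates in `S`
multiplies `dx_{v 0} ∧ ⋯ ∧ dx_{v (m-1)}` by `(-1)^#{j | v j ∈ S}`. Hence an invariant form vanishes
on every basis tuple whose monomial transforms by a nontrivial character of `Γ`. No pair of distinct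
indices has trivial character, and the triples with trivial character are exactly the seven lines
of a Fano plane. So evaluation on those lines identifies the invariant 3-forms with `ℝ⁷`, the
inverse sending the `l`-th coordinate vector to the monomial 3-form of the `l`-th line.
-/

open Finset

theorem AlternatingMap.prod_smul_apply_of_compLinearMap_eq {R M N ι κ : Type*} [CommSemiring R]
    [AddCommMonoid M] [Module R M] [AddCommMonoid N] [Module R N] [Fintype ι]
    {w : M [⋀^ι]→ₗ[R] N} {f : M →ₗ[R] M} (hw : w.compLinearMap f = w) {b : κ → M} {c : κ → R}
    (hf : ∀ k, f (b k) = c k • b k) (v : ι → κ) :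
    (∏ i, c (v i)) • w (fun i => b (v i)) = w (fun i => b (v i)) := by
  conv_rhs => rw [← hw]
  simp only [AlternatingMap.compLinearMap_apply, hf]
  exact (w.toMultilinearMap.map_smul_univ _ _).symm

section SignChanges

variable (S : Finset (Fin 7))

noncomputable def signOf (i : Fin 7) : ℝ := if i ∈ S then -1 else 1

theorem sgnMap_apply (x : Fin 7 → ℝ) (i : Fin 7) : sgnMap S x i = signOf S i * x i := by
  by_cases h : i ∈ S <;> simp [sgnMap, signOf, h]

theorem sgnMap_single (i : Fin 7) :
    sgnMap S (Pi.single i 1) = signOf S i • (Pi.single i 1 : Fin 7 → ℝ) := by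
  funext j
  rw [sgnMap_apply]
  rcases eq_or_ne j i with rfl | hj
  · simp
  · simp [hj]

theorem prod_signOf {ι : Type*} [Fintype ι] (v : ι → Fin 7) :
    ∏ j, signOf S (v j) = (-1) ^ #{j | v j ∈ S} := by
  simp [signOf, Finset.prod_ite]

variable {S}

theorem apply_single_eq_zero_of_odd {m : ℕ} {w : (Fin 7 → ℝ) [⋀^Fin m]→ₗ[ℝ] ℝ}
    (hw : w.compLinearMap (sgnMap S) = w) {v : Fin m → Fin 7} (hodd : Odd #{j | v j ∈ S}) :
    w (fun j => Pi.single (v j) 1) = 0 := by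
  have h := AlternatingMap.prod_smul_apply_of_compLinearMap_eq hw (sgnMap_single S) v
  rwa [prod_signOf, hodd.neg_one_pow, neg_one_smul, neg_eq_self] at h

end SignChanges

def generatorSignSets : Finset (Finset (Fin 7)) := {{3, 4, 5, 6}, {1, 2, 5, 6}, {0, 2, 4, 6}}

/-- The monomial `dx_{v 0} ∧ ⋯ ∧ dx_{v (m-1)}` is multiplied by `-1` under one of the three
generators of `Γ`. -/
def HasNontrivialCharacter {m : ℕ} (v : Fin m → Fin 7) : Prop :=
  ∃ S ∈ generatorSignSets, Odd #{j | v j ∈ S}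

instance {m : ℕ} (v : Fin m → Fin 7) : Decidable (HasNontrivialCharacter v) := by
  unfold HasNontrivialCharacter; infer_instance

theorem apply_single_eq_zero_of_hasNontrivialCharacter {m : ℕ}
    {w : (Fin 7 → ℝ) [⋀^Fin m]→ₗ[ℝ] ℝ} (hw : w ∈ invariantForms m) {v : Fin m → Fin 7}
    (hv : HasNontrivialCharacter v) : w (fun j => Pi.single (v j) 1) = 0 := by
  obtain ⟨hα, hβ, hγ⟩ := hw
  obtain ⟨S, hS, hodd⟩ := hv
  simp only [generatorSignSets, mem_insert, mem_singleton] at hS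
  rcases hS with rfl | rfl | rfl
  exacts [apply_single_eq_zero_of_odd hα hodd, apply_single_eq_zero_of_odd hβ hodd,
    apply_single_eq_zero_of_odd hγ hodd]

theorem hasNontrivialCharacter_of_injective_two (v : Fin 2 → Fin 7) (hv : Function.Injective v) :
    HasNontrivialCharacter v := by
  revert v; decide

theorem invariantForms_two_eq_bot : invariantForms 2 = ⊥ := by
  refine (Submodule.eq_bot_iff _).2 fun w hw => (Pi.basisFun ℝ (Fin 7)).ext_alternating ?_
  intro v hv
  simpa using apply_single_eq_zero_of_hasNontrivialCharacter hw
    (hasNontrivialCharacter_of_injective_two v hv)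

def fanoLine : Fin 7 → Fin 3 → Fin 7 :=
  ![![0, 1, 2], ![0, 3, 4], ![0, 5, 6], ![1, 3, 5], ![1, 4, 6], ![2, 3, 6], ![2, 4, 5]]

theorem fanoLine_injective (l : Fin 7) : Function.Injective (fanoLine l) := by
  revert l; decide

theorem not_hasNontrivialCharacter_fanoLine (l : Fin 7) :
    ¬HasNontrivialCharacter (fanoLine l) := by
  revert l; decide

theorem exists_fanoLine_notMem_fanoLine {l l' : Fin 7} (h : l ≠ l') :
    ∃ i, ∀ j, fanoLine l j ≠ fanoLine l' i := by
  revert l l'; decide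

set_option maxRecDepth 100000 in
theorem hasNontrivialCharacter_or_eq_fanoLine_comp (v : Fin 3 → Fin 7)
    (hv : Function.Injective v) :
    HasNontrivialCharacter v ∨ ∃ l, ∃ σ : Equiv.Perm (Fin 3), v = fanoLine l ∘ σ := by
  revert v; decide

/-- The monomial form `dx_{t 0} ∧ ⋯ ∧ dx_{t (n-1)}`. -/
noncomputable def monomialForm {n : ℕ} (t : Fin n → Fin 7) : (Fin 7 → ℝ) [⋀^Fin n]→ₗ[ℝ] ℝ :=
  Matrix.detRowAlternating.compLinearMap (LinearMap.funLeft ℝ ℝ t)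

theorem monomialForm_apply {n : ℕ} (t : Fin n → Fin 7) (x : Fin n → Fin 7 → ℝ) :
    monomialForm t x = (Matrix.of fun i j => x i (t j)).det :=
  rfl

theorem monomialForm_compLinearMap_sgnMap {n : ℕ} (t : Fin n → Fin 7) (S : Finset (Fin 7)) :
    (monomialForm t).compLinearMap (sgnMap S) = (∏ j, signOf S (t j)) • monomialForm t := by
  ext x
  simp only [AlternatingMap.compLinearMap_apply, AlternatingMap.smul_apply, monomialForm_apply,
    sgnMap_apply, smul_eq_mul]
  exact Matrix.det_mul_row (fun j => signOf S (t j)) (Matrix.of fun i j => x i (t j))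

theorem monomialForm_fanoLine_mem (l : Fin 7) : monomialForm (fanoLine l) ∈ invariantForms 3 := by
  have hinv : ∀ S ∈ generatorSignSets,
      (monomialForm (fanoLine l)).compLinearMap (sgnMap S) = monomialForm (fanoLine l) := by
    intro S hS
    have heven : Even #{j | fanoLine l j ∈ S} :=
      Nat.not_odd_iff_even.1 fun hodd => not_hasNontrivialCharacter_fanoLine l ⟨S, hS, hodd⟩
    rw [monomialForm_compLinearMap_sgnMap, prod_signOf, heven.neg_one_pow, one_smul]
  refine ⟨hinv _ ?_, hinv _ ?_, hinv _ ?_⟩ <;> simp [generatorSignSets]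

theorem monomialForm_fanoLine_apply_single (l l' : Fin 7) :
    monomialForm (fanoLine l) (fun i => Pi.single (fanoLine l' i) 1) =
      (Pi.single l 1 : Fin 7 → ℝ) l' := by
  rw [monomialForm_apply]
  rcases eq_or_ne l l' with rfl | hne
  · have hid :
        (Matrix.of fun i j => (Pi.single (fanoLine l i) 1 : Fin 7 → ℝ) (fanoLine l j)) = 1 := by
      ext i j
      simp [Pi.single_apply, Matrix.one_apply, (fanoLine_injective l).eq_iff, eq_comm]
    simp [hid]
  · obtain ⟨i, hi⟩ := exists_fanoLine_notMem_fanoLine hne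
    rw [Pi.single_eq_of_ne' hne]
    exact Matrix.det_eq_zero_of_row_eq_zero i fun j => Pi.single_eq_of_ne (hi j) _

noncomputable def fanoLineValues : invariantForms 3 →ₗ[ℝ] (Fin 7 → ℝ) where
  toFun w l := (w : (Fin 7 → ℝ) [⋀^Fin 3]→ₗ[ℝ] ℝ) fun i => Pi.single (fanoLine l i) 1
  map_add' _ _ := rfl
  map_smul' _ _ := rfl

theorem fanoLineValues_injective : Function.Injective fanoLineValues := by
  refine (injective_iff_map_eq_zero _).2 fun ⟨w, hw⟩ h0 => Subtype.ext ?_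
  refine (Pi.basisFun ℝ (Fin 7)).ext_alternating fun v hv => ?_
  simp only [Pi.basisFun_apply, Submodule.coe_zero, AlternatingMap.zero_apply]
  rcases hasNontrivialCharacter_or_eq_fanoLine_comp v hv with hχ | ⟨l, σ, rfl⟩
  · exact apply_single_eq_zero_of_hasNontrivialCharacter hw hχ
  · have hl : w (fun i => Pi.single (fanoLine l i) 1) = 0 := congrFun h0 l
    rw [show (fun i => (Pi.single ((fanoLine l ∘ σ) i) 1 : Fin 7 → ℝ)) =
        (fun i => Pi.single (fanoLine l i) 1) ∘ σ from rfl, w.map_perm, hl, smul_zero]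

theorem fanoLineValues_surjective : Function.Surjective fanoLineValues := by
  intro y
  refine ⟨∑ l, y l • ⟨monomialForm (fanoLine l), monomialForm_fanoLine_mem l⟩, ?_⟩
  have hbasis : ∀ l, fanoLineValues ⟨_, monomialForm_fanoLine_mem l⟩ = Pi.single l 1 :=
    fun l => funext (monomialForm_fanoLine_apply_single l)
  simp only [map_sum, map_smul, hbasis]
  simpa using (Pi.basisFun ℝ (Fin 7)).sum_repr y

/-- The space of `Γ`-invariant constant-coefficient 2-forms on `ℝ⁷` is zero, and the
space of `Γ`-invariant 3-forms has dimension 7 (computing `b²(T⁷/Γ) = 0` and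
`b³(T⁷/Γ) = 7`). -/
theorem invariantForms_dim :
    invariantForms 2 = ⊥ ∧ Module.finrank ℝ (invariantForms 3) = 7 := by
  refine ⟨invariantForms_two_eq_bot, ?_⟩
  rw [(LinearEquiv.ofBijective fanoLineValues
    ⟨fanoLineValues_injective, fanoLineValues_surjective⟩).finrank_eq, Module.finrank_fin_fun]
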